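/- arXiv:math/0606023 — 3 statements merged into one kernel-verified Lean document; each statement's English description precedes it below -/
import Mathlib

section
/- Two base point preserving maps f₁, f₂ : S^m → Sⁿ (m, n ≥ 1) form a loose pair (i.e., are homotopic to a coincidence free pair) if and only if f₁ is homotopic to A ∘ f₂, where A : Sⁿ → Sⁿ is the antipodal map. -/
/-- The unit sphere `Sⁿ ⊂ ℝ^{n+1}`. -/
abbrev Sph (n : ℕ) := Metric.sphere (0 : EuclideanSpace ℝ (Fin (n + 1))) 1

/-- The antipodal map `A : Sⁿ → Sⁿ`. -/
noncomputable def antipodal (n : ℕ) : C(Sph n, Sph n) :=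
  ⟨fun y => ⟨-y.1, by simp [y.2]⟩, by continuity⟩

/-- A pair of maps is loose if it is homotopic to a coincidence free pair. -/
def LoosePair {M N : Type*} [TopologicalSpace M] [TopologicalSpace N]
    (f₁ f₂ : C(M, N)) : Prop :=
  ∃ f₁' f₂' : C(M, N), f₁.Homotopic f₁' ∧ f₂.Homotopic f₂' ∧ ∀ x : M, f₁' x ≠ f₂' x

/-! Two maps into the unit sphere that never take antipodal values are homotopic, through the
normalised straight-line homotopy `‖(1 - t) f + t g‖⁻¹ • ((1 - t) f + t g)`. Hence a coincidence free
pair `(f₁', f₂')` gives `f₁' ≃ A ∘ f₂'`; conversely `(A ∘ f₂, f₂)` is coincidence free because `A`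
has no fixed points. -/

open Metric

section SphereHomotopy

variable {E : Type*} [NormedAddCommGroup E] [NormedSpace ℝ E]

theorem one_sub_smul_add_smul_ne_zero_of_norm_eq {u v : E} (hnorm : ‖u‖ = ‖v‖) (huv : u ≠ -v)
    {t : ℝ} (ht : t ∈ Set.Icc (0 : ℝ) 1) : (1 - t) • u + t • v ≠ 0 := by
  intro h
  have hu : ‖u‖ ≠ 0 := fun hu => huv <| by
    rw [norm_eq_zero.1 hu, norm_eq_zero.1 (hnorm.symm.trans hu), neg_zero]
  have ht_half : t = 1 / 2 := by
    have := congrArg norm (eq_neg_of_add_eq_zero_left h)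
    rw [norm_neg, norm_smul, norm_smul, Real.norm_of_nonneg (by linarith [ht.2]),
      Real.norm_of_nonneg ht.1, ← hnorm] at this
    linarith [mul_right_cancel₀ hu this]
  subst ht_half
  refine huv (eq_neg_of_add_eq_zero_left ?_)
  have : (1 / 2 : ℝ) • (u + v) = 0 := by rw [smul_add]; convert h using 3; norm_num
  exact (smul_eq_zero.1 this).resolve_left (by norm_num)

theorem ContinuousMap.homotopic_of_forall_ne_neg {X : Type*} [TopologicalSpace X]
    (f g : C(X, sphere (0 : E) 1)) (h : ∀ x, f x ≠ -g x) : f.Homotopic g := by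
  let w : unitInterval × X → E := fun p => (1 - (p.1 : ℝ)) • (f p.2 : E) + (p.1 : ℝ) • (g p.2 : E)
  have hw : ∀ p, w p ≠ 0 := fun p =>
    one_sub_smul_add_smul_ne_zero_of_norm_eq (by simp) (fun hfg => h p.2 (Subtype.ext hfg)) p.1.2
  have hwc : Continuous w := by fun_prop
  let H : C(unitInterval × X, sphere (0 : E) 1) :=
    ⟨fun p => ⟨‖w p‖⁻¹ • w p, mem_sphere_zero_iff_norm.2 (norm_smul_inv_norm (hw p))⟩,
      ((hwc.norm.inv₀ fun p => norm_ne_zero_iff.2 (hw p)).smul hwc).subtype_mk _⟩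
  exact ⟨⟨H, fun x => by ext1; simp [H, w], fun x => by ext1; simp [H, w]⟩⟩

end SphereHomotopy

theorem antipodal_apply (n : ℕ) (y : Sph n) : antipodal n y = -y := rfl

theorem stmt5_general (m n : ℕ) (f₁ f₂ : C(Sph m, Sph n)) :
    LoosePair f₁ f₂ ↔ f₁.Homotopic ((antipodal n).comp f₂) := by
  constructor
  · rintro ⟨f₁', f₂', h₁, h₂, hne⟩
    have h' : f₁'.Homotopic ((antipodal n).comp f₂') :=
      ContinuousMap.homotopic_of_forall_ne_neg _ _ fun x => by
        rw [ContinuousMap.comp_apply, antipodal_apply, neg_neg]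
        exact hne x
    exact h₁.trans (h'.trans ((ContinuousMap.Homotopic.refl _).comp h₂.symm))
  · intro h
    exact ⟨_, f₂, h, .refl f₂, fun x => (ne_neg_of_mem_unit_sphere ℝ (f₂ x)).symm⟩

/-- Two base point preserving maps `f₁, f₂ : Sᵐ → Sⁿ` (`m, n ≥ 1`) form a
loose pair if and only if `f₁` is homotopic to `A ∘ f₂`, where `A` is the antipodal map. -/
theorem stmt5 (m n : ℕ) (hm : 1 ≤ m) (hn : 1 ≤ n)
    (pt : Sph m) (y₁ y₂ : Sph n)
    (f₁ f₂ : C(Sph m, Sph n)) (hf₁ : f₁ pt = y₁) (hf₂ : f₂ pt = y₂) :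
    LoosePair f₁ f₂ ↔ f₁.Homotopic ((antipodal n).comp f₂) :=
  stmt5_general m n f₁ f₂
end

section
/- For n ≥ 1, for q ≥ 3 the projection C̃_q(Sⁿ) → C̃₃(Sⁿ) (forgetting the last q−3 points) admits a section up to the identification C̃₃(Sⁿ) ≃ TSⁿ − (zero section); hence for every topological space M and all q ≥ 3, [M, Sⁿ]^(q) = [M, Sⁿ]^(3), and [M, Sⁿ]^(3) = p_{R*}([M, V_{n+1,2}(R)]) where p_R : V_{n+1,2}(R) → Sⁿ projects a frame to its first vector. -/
open scoped RealInnerProductSpace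

/-- Ordered configuration space `C̃_q(N)` of `q` pairwise distinct points in `N`. -/
def Cfg (q : ℕ) (N : Type*) [TopologicalSpace N] : Type _ :=
  {y : Fin q → N // ∀ i j : Fin q, i ≠ j → y i ≠ y j}

instance (q : ℕ) (N : Type*) [TopologicalSpace N] : TopologicalSpace (Cfg q N) :=
  inferInstanceAs (TopologicalSpace {y : Fin q → N // ∀ i j : Fin q, i ≠ j → y i ≠ y j})

/-- The projection `p_q : C̃_q(N) → N` to the first point of a configuration. -/
def cfgProj (q : ℕ) (hq : 0 < q) (N : Type*) [TopologicalSpace N] : C(Cfg q N, N) :=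
  ⟨fun y => y.1 ⟨0, hq⟩, (continuous_apply _).comp continuous_subtype_val⟩

/-- The Stiefel manifold `V_{r,2}(ℝ)` of orthonormal 2-frames in `ℝ^r`. -/
def StiefelR (r : ℕ) : Type :=
  {w : EuclideanSpace ℝ (Fin r) × EuclideanSpace ℝ (Fin r) //
    ‖w.1‖ = 1 ∧ ‖w.2‖ = 1 ∧ ⟪w.1, w.2⟫ = 0}

noncomputable instance (r : ℕ) : TopologicalSpace (StiefelR r) :=
  inferInstanceAs (TopologicalSpace {w : EuclideanSpace ℝ (Fin r) × EuclideanSpace ℝ (Fin r) //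
    ‖w.1‖ = 1 ∧ ‖w.2‖ = 1 ∧ ⟪w.1, w.2⟫ = 0})

/-- The projection `p_ℝ : V_{r,2}(ℝ) → S^{r-1}` of a frame to its first vector. -/
noncomputable def stiefelProj (r : ℕ) :
    C(StiefelR r, Metric.sphere (0 : EuclideanSpace ℝ (Fin r)) 1) :=
  ⟨fun w => ⟨w.1.1, by simp [w.2.1]⟩, by
    apply Continuous.subtype_mk
    exact continuous_fst.comp continuous_subtype_val⟩

/-- The standard orthonormal 2-frame `(e₀, e₁)` in `ℝ^r`, `r ≥ 2`. -/
noncomputable def baseFrame (r : ℕ) (hr : 2 ≤ r) : StiefelR r :=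
  ⟨(EuclideanSpace.single ⟨0, by omega⟩ 1, EuclideanSpace.single ⟨1, by omega⟩ 1),
    by simp, by simp,
    by rw [EuclideanSpace.inner_single_left]; simp [EuclideanSpace.single_apply]⟩

/-- The base point `e₀` of the sphere `S^{r-1} ⊂ ℝ^r` (`r ≥ 1`). -/
noncomputable def spherePt (r : ℕ) (hr : 1 ≤ r) :
    Metric.sphere (0 : EuclideanSpace ℝ (Fin r)) 1 :=
  ⟨EuclideanSpace.single ⟨0, by omega⟩ 1, by simp⟩

/-- The map `C̃_q(N) → C̃₃(N)` forgetting all but the first three points (`q ≥ 3`). -/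
def cfgRestrict (q : ℕ) (hq : 3 ≤ q) (N : Type*) [TopologicalSpace N] :
    C(Cfg q N, Cfg 3 N) :=
  ⟨fun y => ⟨fun i => y.1 ⟨i.1, lt_of_lt_of_le i.2 hq⟩,
      fun i j hij => y.2 _ _ (by simpa [Fin.ext_iff] using hij)⟩,
    by
      apply Continuous.subtype_mk
      exact continuous_pi fun i => (continuous_apply _).comp continuous_subtype_val⟩

/-!
Take the first point `x = y 0` of a configuration `y ∈ C̃₃(Sⁿ)` as the pole of the stereographic
projection `Sⁿ ∖ {x} → x^⊥`. The images of `y 1` and `y 2` span an affine line in `x^⊥`; pulling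
back its integer points adds as many further distinct points as wanted, continuously in `y`,
which gives a section of `C̃_q(Sⁿ) → C̃₃(Sⁿ)`. The direction of the same line completes `x` to an
orthonormal 2-frame, a map `C̃₃(Sⁿ) → V_{n+1,2}(ℝ)` over `Sⁿ`; conversely a frame `(u, v)` gives
the configuration `(u, v, -v)`. Maps over `Sⁿ` in both directions between `C̃_q(Sⁿ)` and
`V_{n+1,2}(ℝ)` force the images of `p_{q*}` and `p_{ℝ*}` to agree.
-/

theorem ContinuousMap.exists_homotopic_comp_of_comp_eq {M X A B : Type*} [TopologicalSpace M]
    [TopologicalSpace X] [TopologicalSpace A] [TopologicalSpace B] {pA : C(A, X)} {pB : C(B, X)}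
    (φ : C(A, B)) (hφ : pB.comp φ = pA) {f : C(M, X)} :
    (∃ g : C(M, A), f.Homotopic (pA.comp g)) → ∃ h : C(M, B), f.Homotopic (pB.comp h)
  | ⟨g, hg⟩ => ⟨φ.comp g, by rwa [← ContinuousMap.comp_assoc, hφ]⟩

def Cfg.mk₃ {N : Type*} [TopologicalSpace N] {a b c : N} (hab : a ≠ b) (hac : a ≠ c) (hbc : b ≠ c) :
    Cfg 3 N :=
  ⟨![a, b, c], by
    intro i j hij
    fin_cases i <;> fin_cases j <;> simp_all [Ne.symm]⟩

theorem ne_and_ne_neg_of_inner_eq_zero {E : Type*} [NormedAddCommGroup E] [InnerProductSpace ℝ E]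
    {u v : E} (hv : ‖v‖ = 1) (huv : ⟪u, v⟫ = 0) :
    u ≠ v ∧ u ≠ -v ∧ v ≠ -v := by
  have hvv : ⟪v, v⟫ = 1 := by rw [real_inner_self_eq_norm_sq, hv, one_pow]
  refine ⟨fun h => ?_, fun h => ?_, fun h => ?_⟩
  · rw [h] at huv; linarith
  · rw [h, inner_neg_left] at huv; linarith
  · have hv' := congrArg (⟪v, ·⟫) h
    simp only [inner_neg_right, hvv] at hv'
    linarith

section Stereographic

variable {E : Type*} [NormedAddCommGroup E] [InnerProductSpace ℝ E] {x : E}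

noncomputable def stereoProj (x y : E) : E := (1 - ⟪y, x⟫)⁻¹ • (y - ⟪y, x⟫ • x)

noncomputable def stereoProjInv (x p : E) : E :=
  (‖p‖ ^ 2 + 1)⁻¹ • ((‖p‖ ^ 2 - 1) • x + (2 : ℝ) • p)

theorem inner_stereoProj (hx : ‖x‖ = 1) (y : E) : ⟪stereoProj x y, x⟫ = 0 := by
  rw [stereoProj, real_inner_smul_left, inner_sub_left, real_inner_smul_left,
    real_inner_self_eq_norm_sq, hx]
  ring

theorem inner_stereoProjInv (hx : ‖x‖ = 1) {p : E} (hp : ⟪p, x⟫ = 0) :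
    ⟪stereoProjInv x p, x⟫ = (‖p‖ ^ 2 - 1) / (‖p‖ ^ 2 + 1) := by
  rw [stereoProjInv, real_inner_smul_left, inner_add_left, real_inner_smul_left,
    real_inner_smul_left, real_inner_self_eq_norm_sq, hx, hp]
  ring

theorem stereoProjInv_ne (hx : ‖x‖ = 1) {p : E} (hp : ⟪p, x⟫ = 0) : stereoProjInv x p ≠ x := by
  intro h
  have h1 := inner_stereoProjInv hx hp
  rw [h, real_inner_self_eq_norm_sq, hx, eq_div_iff (by positivity)] at h1
  linarith

theorem norm_stereoProjInv (hx : ‖x‖ = 1) {p : E} (hp : ⟪p, x⟫ = 0) :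
    ‖stereoProjInv x p‖ = 1 := by
  have hpx : ⟪x, p⟫ = 0 := by rw [real_inner_comm, hp]
  have hsq : ‖stereoProjInv x p‖ ^ 2 = 1 := by
    rw [← real_inner_self_eq_norm_sq, stereoProjInv, real_inner_smul_left, real_inner_smul_right,
      inner_add_left, inner_add_right, inner_add_right, real_inner_smul_left, real_inner_smul_left,
      real_inner_smul_left, real_inner_smul_right, real_inner_smul_right, real_inner_smul_right,
      real_inner_self_eq_norm_sq, real_inner_self_eq_norm_sq, hx, hp, hpx, norm_smul,
      Real.norm_ofNat, mul_pow]
    field_simp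
    ring
  exact (pow_eq_one_iff_of_nonneg (norm_nonneg _) two_ne_zero).mp hsq

theorem stereoProj_stereoProjInv (hx : ‖x‖ = 1) {p : E} (hp : ⟪p, x⟫ = 0) :
    stereoProj x (stereoProjInv x p) = p := by
  have hden : ‖p‖ ^ 2 + 1 ≠ 0 := by positivity
  rw [stereoProj, inner_stereoProjInv hx hp, stereoProjInv]
  match_scalars <;> field_simp <;> ring

theorem stereoProjInv_stereoProj (hx : ‖x‖ = 1) {y : E} (hy : ‖y‖ = 1) (hyx : y ≠ x) :
    stereoProjInv x (stereoProj x y) = y := by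
  have hden : 1 - ⟪y, x⟫ ≠ 0 :=
    sub_ne_zero.mpr fun h => hyx ((inner_eq_one_iff_of_norm_eq_one hy hx).mp h.symm)
  have hnorm : ‖stereoProj x y‖ ^ 2 = (1 + ⟪y, x⟫) / (1 - ⟪y, x⟫) := by
    rw [stereoProj, norm_smul, mul_pow, norm_sub_sq_real, real_inner_smul_right, norm_smul, hx,
      hy, Real.norm_eq_abs, Real.norm_eq_abs, mul_one, sq_abs, sq_abs]
    field_simp
    ring
  rw [stereoProjInv, hnorm, stereoProj]
  match_scalars <;> field_simp <;> ring

variable {X : Type*} [TopologicalSpace X] {f g : X → E}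

theorem Continuous.stereoProj (hf : Continuous f) (hg : Continuous g)
    (h : ∀ t, ⟪g t, f t⟫ ≠ 1) : Continuous fun t => stereoProj (f t) (g t) :=
  ((continuous_const.sub (hg.inner hf)).inv₀ fun t => sub_ne_zero.mpr (h t).symm).smul
    (hg.sub ((hg.inner hf).smul hf))

theorem Continuous.stereoProjInv (hf : Continuous f) (hg : Continuous g) :
    Continuous fun t => stereoProjInv (f t) (g t) := by
  have hn : Continuous fun t => ‖g t‖ ^ 2 := hg.norm.pow 2
  have hden (t : X) : ‖g t‖ ^ 2 + 1 ≠ 0 := by positivity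
  exact ((hn.add continuous_const).inv₀ hden).smul
    (((hn.sub continuous_const).smul hf).add (hg.const_smul (2 : ℝ)))

end Stereographic

section SphereConfigurations

variable {E : Type*} [NormedAddCommGroup E] {q : ℕ}

local notation "S" => Metric.sphere (0 : E) 1

namespace Cfg

def vec (y : Cfg q S) (i : Fin q) : E := y.1 i

theorem norm_vec (y : Cfg q S) (i : Fin q) : ‖y.vec i‖ = 1 :=
  mem_sphere_zero_iff_norm.mp (y.1 i).2

theorem vec_ne (y : Cfg q S) {i j : Fin q} (h : i ≠ j) : y.vec i ≠ y.vec j :=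
  fun hij => y.2 i j h (Subtype.ext hij)

theorem continuous_vec (i : Fin q) : Continuous fun y : Cfg q S => y.vec i :=
  continuous_subtype_val.comp ((continuous_apply i).comp continuous_subtype_val)

variable [InnerProductSpace ℝ E]

theorem stereoProjInv_stereoProj_vec (y : Cfg q S) {i j : Fin q} (h : i ≠ j) :
    stereoProjInv (y.vec j) (stereoProj (y.vec j) (y.vec i)) = y.vec i :=
  stereoProjInv_stereoProj (y.norm_vec j) (y.norm_vec i) (y.vec_ne h)

theorem continuous_stereoProj_vec {i j : Fin q} (h : i ≠ j) :
    Continuous fun y : Cfg q S => stereoProj (y.vec j) (y.vec i) :=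
  (continuous_vec j).stereoProj (continuous_vec i) fun y hy =>
    y.vec_ne h ((inner_eq_one_iff_of_norm_eq_one (y.norm_vec i) (y.norm_vec j)).mp hy)

noncomputable def stereoLine (y : Cfg 3 S) : ℝ →ᵃ[ℝ] E :=
  AffineMap.lineMap (stereoProj (y.vec 0) (y.vec 1)) (stereoProj (y.vec 0) (y.vec 2))

theorem inner_stereoLine (y : Cfg 3 S) (c : ℝ) : ⟪y.stereoLine c, y.vec 0⟫ = 0 := by
  rw [stereoLine, AffineMap.lineMap_apply_module, inner_add_left, real_inner_smul_left,
    real_inner_smul_left, inner_stereoProj (y.norm_vec 0), inner_stereoProj (y.norm_vec 0)]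
  ring

theorem stereoLine_injective (y : Cfg 3 S) : Function.Injective y.stereoLine := by
  refine AffineMap.lineMap_injective ℝ fun h => y.vec_ne (show (1 : Fin 3) ≠ 2 by decide) ?_
  rw [← y.stereoProjInv_stereoProj_vec (show (1 : Fin 3) ≠ 0 by decide), h,
    y.stereoProjInv_stereoProj_vec (show (2 : Fin 3) ≠ 0 by decide)]

theorem continuous_stereoLine (c : ℝ) : Continuous fun y : Cfg 3 S => y.stereoLine c :=
  (continuous_stereoProj_vec (by decide)).lineMap (continuous_stereoProj_vec (by decide))
    continuous_const

theorem stereoLine_one_sub_zero_ne (y : Cfg 3 S) : y.stereoLine 1 - y.stereoLine 0 ≠ 0 :=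
  sub_ne_zero.mpr (y.stereoLine_injective.ne one_ne_zero)

/-- Index `i ≥ 1` goes to the preimage of `stereoLine (i - 1)`, so that `i = 1, 2` recover
`y 1, y 2`. -/
noncomputable def extendVec (y : Cfg 3 S) (i : ℕ) : E :=
  if i = 0 then y.vec 0 else stereoProjInv (y.vec 0) (y.stereoLine (i - 1 : ℕ))

theorem norm_extendVec (y : Cfg 3 S) (i : ℕ) : ‖y.extendVec i‖ = 1 := by
  unfold extendVec
  split_ifs
  · exact y.norm_vec 0
  · exact norm_stereoProjInv (y.norm_vec 0) (y.inner_stereoLine _)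

theorem extendVec_injective (y : Cfg 3 S) : Function.Injective y.extendVec := by
  have hne (i : ℕ) : stereoProjInv (y.vec 0) (y.stereoLine (i - 1 : ℕ)) ≠ y.vec 0 :=
    stereoProjInv_ne (y.norm_vec 0) (y.inner_stereoLine _)
  intro i j h
  unfold extendVec at h
  split_ifs at h with hi hj hj
  · omega
  · exact absurd h.symm (hne j)
  · exact absurd h (hne i)
  · have h' := congrArg (stereoProj (y.vec 0)) h
    rw [stereoProj_stereoProjInv (y.norm_vec 0) (y.inner_stereoLine _),
      stereoProj_stereoProjInv (y.norm_vec 0) (y.inner_stereoLine _)] at h'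
    have := Nat.cast_injective (y.stereoLine_injective h')
    omega

theorem extendVec_fin_three (y : Cfg 3 S) (i : Fin 3) : y.extendVec i = y.vec i := by
  fin_cases i
  · rfl
  · simpa [extendVec, stereoLine] using y.stereoProjInv_stereoProj_vec (i := 1) (j := 0) (by decide)
  · simpa [extendVec, stereoLine] using y.stereoProjInv_stereoProj_vec (i := 2) (j := 0) (by decide)

theorem continuous_extendVec (i : ℕ) : Continuous fun y : Cfg 3 S => y.extendVec i := by
  unfold extendVec
  split_ifs
  · exact continuous_vec 0
  · exact (continuous_vec 0).stereoProjInv (continuous_stereoLine _)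

noncomputable def extend (q : ℕ) : C(Cfg 3 S, Cfg q S) :=
  ⟨fun y => ⟨fun i => ⟨y.extendVec i, mem_sphere_zero_iff_norm.mpr (y.norm_extendVec i)⟩,
      fun _ _ hij h => hij (Fin.ext (y.extendVec_injective (congrArg Subtype.val h)))⟩,
    by
      refine Continuous.subtype_mk (continuous_pi fun i => ?_) _
      exact (continuous_extendVec _).subtype_mk _⟩

theorem cfgRestrict_comp_extend (hq : 3 ≤ q) :
    (cfgRestrict q hq S).comp (extend q) = ContinuousMap.id _ :=
  ContinuousMap.ext fun y => Subtype.ext <| funext fun i => Subtype.ext (y.extendVec_fin_three i)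

theorem cfgProj_comp_extend (hq : 0 < q) :
    (cfgProj q hq S).comp (extend q) = cfgProj 3 (by norm_num) S :=
  ContinuousMap.ext fun y => Subtype.ext (y.extendVec_fin_three 0)

end Cfg

end SphereConfigurations

section StiefelConfigurations

variable {r : ℕ}

local notation "S" => Metric.sphere (0 : EuclideanSpace ℝ (Fin r)) 1

noncomputable def Cfg.toStiefel : C(Cfg 3 S, StiefelR r) :=
  ⟨fun y => ⟨(y.vec 0, ‖y.stereoLine 1 - y.stereoLine 0‖⁻¹ • (y.stereoLine 1 - y.stereoLine 0)),
      y.norm_vec 0, norm_smul_inv_norm y.stereoLine_one_sub_zero_ne, by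
        rw [real_inner_smul_right, inner_sub_right, real_inner_comm, y.inner_stereoLine,
          real_inner_comm, y.inner_stereoLine, sub_zero, mul_zero]⟩, by
    refine Continuous.subtype_mk ((Cfg.continuous_vec 0).prodMk ?_) _
    have hd := (Cfg.continuous_stereoLine (E := EuclideanSpace ℝ (Fin r)) 1).sub
      (Cfg.continuous_stereoLine 0)
    exact (hd.norm.inv₀ fun y => norm_ne_zero_iff.mpr y.stereoLine_one_sub_zero_ne).smul hd⟩

theorem stiefelProj_comp_toStiefel :
    (stiefelProj r).comp Cfg.toStiefel = cfgProj 3 (by norm_num) S := rfl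

noncomputable def StiefelR.toCfg : C(StiefelR r, Cfg 3 S) :=
  ⟨fun w =>
    have h := ne_and_ne_neg_of_inner_eq_zero w.2.2.1 w.2.2.2
    Cfg.mk₃ (a := ⟨w.1.1, mem_sphere_zero_iff_norm.mpr w.2.1⟩)
      (b := ⟨w.1.2, mem_sphere_zero_iff_norm.mpr w.2.2.1⟩) (c := ⟨-w.1.2, by simpa using w.2.2.1⟩)
      (Subtype.coe_ne_coe.mp h.1) (Subtype.coe_ne_coe.mp h.2.1) (Subtype.coe_ne_coe.mp h.2.2), by
    refine Continuous.subtype_mk ?_ _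
    fun_prop⟩

theorem cfgProj_comp_toCfg : (cfgProj 3 (by norm_num) S).comp StiefelR.toCfg = stiefelProj r :=
  rfl

end StiefelConfigurations

/-- For `n ≥ 1` and `q ≥ 3`, the projection `C̃_q(Sⁿ) → C̃₃(Sⁿ)` admits a
section up to homotopy; hence for every topological space `M` and all `q ≥ 3`,
`[M, Sⁿ]^(q) = [M, Sⁿ]^(3) = p_{ℝ*}([M, V_{n+1,2}(ℝ)])`, where
`p_ℝ : V_{n+1,2}(ℝ) → Sⁿ` projects a frame to its first vector. -/
theorem stmt15 (n : ℕ) (q : ℕ) (hq : 3 ≤ q) :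
    (∃ s : C(Cfg 3 (Sph n), Cfg q (Sph n)),
      ((cfgRestrict q hq (Sph n)).comp s).Homotopic (ContinuousMap.id _)) ∧
    ∀ (M : Type) [TopologicalSpace M] (f : C(M, Sph n)),
      (∃ g : C(M, Cfg q (Sph n)), f.Homotopic ((cfgProj q (by omega) (Sph n)).comp g)) ↔
      (∃ h : C(M, StiefelR (n + 1)), f.Homotopic ((stiefelProj (n + 1)).comp h)) := by
  refine ⟨⟨Cfg.extend q, by rw [Cfg.cfgRestrict_comp_extend]⟩, fun M _ f => ⟨?_, ?_⟩⟩
  · have hφ : (stiefelProj (n + 1)).comp (Cfg.toStiefel.comp (cfgRestrict q hq (Sph n))) =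
        cfgProj q (by omega) (Sph n) := by
      rw [← ContinuousMap.comp_assoc, stiefelProj_comp_toStiefel]
      rfl
    exact ContinuousMap.exists_homotopic_comp_of_comp_eq _ hφ
  · have hψ : (cfgProj q (by omega) (Sph n)).comp ((Cfg.extend q).comp StiefelR.toCfg) =
        stiefelProj (n + 1) := by
      rw [← ContinuousMap.comp_assoc, Cfg.cfgProj_comp_extend, cfgProj_comp_toCfg]
    exact ContinuousMap.exists_homotopic_comp_of_comp_eq _ hψ
end

section
/- If n is odd, then [M, Sⁿ]^(q) = [M, Sⁿ] for every topological space M and every q ≥ 1. -/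
open Function Metric

namespace Cfg

section Map

variable {q : ℕ} {X Y : Type*} [TopologicalSpace X] [TopologicalSpace Y]

def map (f : C(X, Y)) (hf : Injective f) : C(Cfg q X, Cfg q Y) :=
  ⟨fun y => ⟨f ∘ y.1, fun _ _ hij => hf.ne (y.2 _ _ hij)⟩,
    (continuous_pi fun i => f.continuous.comp
      ((continuous_apply i).comp continuous_subtype_val)).subtype_mk _⟩

theorem exists_cfgProj_comp_eq_id_of_homeomorph (hq : 0 < q) (e : X ≃ₜ Y)
    (h : ∃ s : C(X, Cfg q X), (cfgProj q hq X).comp s = ContinuousMap.id X) :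
    ∃ s : C(Y, Cfg q Y), (cfgProj q hq Y).comp s = ContinuousMap.id Y := by
  obtain ⟨s, hs⟩ := h
  refine ⟨(map (e : C(X, Y)) e.injective).comp (s.comp (e.symm : C(Y, X))), ?_⟩
  ext1 y
  exact (congrArg e (ContinuousMap.congr_fun hs (e.symm y))).trans (e.apply_symm_apply y)

end Map

section Orbit

variable {q : ℕ} {G X : Type*} [Monoid G] [MulAction G X] [TopologicalSpace X]
  [ContinuousConstSMul G X]

def orbit (z : Fin q → G) (hz : ∀ x : X, Injective fun i => z i • x) : C(X, Cfg q X) :=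
  ⟨fun x => ⟨fun i => z i • x, fun _ _ hij => (hz x).ne hij⟩,
    (continuous_pi fun i => continuous_const_smul (z i)).subtype_mk _⟩

theorem cfgProj_comp_orbit (hq : 0 < q) (z : Fin q → G)
    (hz : ∀ x : X, Injective fun i => z i • x) (hz₀ : z ⟨0, hq⟩ = 1) :
    (cfgProj q hq X).comp (orbit z hz) = ContinuousMap.id X := by
  ext1 x
  exact (congrArg (· • x) hz₀).trans (one_smul G x)

end Orbit

end Cfg

theorem smul_sphere_injective {𝕜 V : Type*} [NormedField 𝕜] [NormedAddCommGroup V]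
    [NormedSpace 𝕜 V] (x : sphere (0 : V) 1) :
    Injective fun c : sphere (0 : 𝕜) 1 => c • x := fun _ _ h =>
  Subtype.ext <| smul_left_injective 𝕜 (ne_zero_of_mem_unit_sphere x) (congrArg Subtype.val h)

theorem exists_injective_unitSphere_complex {q : ℕ} (hq : 0 < q) :
    ∃ z : Fin q → sphere (0 : ℂ) 1, Injective z ∧ z ⟨0, hq⟩ = 1 := by
  have hζ := Complex.isPrimitiveRoot_exp q hq.ne'
  have hnorm : ∀ i : ℕ, Complex.exp (2 * Real.pi * Complex.I / q) ^ i ∈ sphere (0 : ℂ) 1 :=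
    fun i => mem_sphere_zero_iff_norm.2 <| by
      rw [norm_pow, Complex.norm_eq_one_of_pow_eq_one hζ.pow_eq_one hq.ne', one_pow]
  refine ⟨fun i => ⟨_, hnorm i⟩, fun i j hij => ?_, Subtype.ext (pow_zero _)⟩
  exact Fin.ext (hζ.pow_inj i.isLt j.isLt (congrArg Subtype.val hij))

theorem exists_cfgProj_comp_eq_id_sphere_complex (q : ℕ) (hq : 0 < q) (V : Type*)
    [NormedAddCommGroup V] [NormedSpace ℂ V] :
    ∃ s : C(sphere (0 : V) 1, Cfg q (sphere (0 : V) 1)),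
      (cfgProj q hq _).comp s = ContinuousMap.id _ := by
  obtain ⟨z, hz, hz₀⟩ := exists_injective_unitSphere_complex hq
  exact ⟨Cfg.orbit z fun x => (smul_sphere_injective x).comp hz,
    Cfg.cfgProj_comp_orbit hq z _ hz₀⟩

def LinearIsometryEquiv.unitSphereHomeomorph {E F : Type*} [NormedAddCommGroup E]
    [NormedAddCommGroup F] [NormedSpace ℝ E] [NormedSpace ℝ F] (e : E ≃ₗᵢ[ℝ] F) :
    sphere (0 : E) 1 ≃ₜ sphere (0 : F) 1 :=
  e.toHomeomorph.subtype fun x => by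
    simp only [mem_sphere_zero_iff_norm, LinearIsometryEquiv.coe_toHomeomorph, e.norm_map]

theorem nonempty_sph_homeomorph_unitSphere_complex {n k : ℕ} (hk : n = 2 * k + 1) :
    Nonempty (Sph n ≃ₜ sphere (0 : EuclideanSpace ℂ (Fin (k + 1))) 1) := by
  have hdim : n + 1 = Module.finrank ℝ (EuclideanSpace ℂ (Fin (k + 1))) := by
    rw [finrank_real_of_complex, finrank_euclideanSpace_fin]
    omega
  exact ⟨((EuclideanSpace.basisFun _ ℝ).equiv (stdOrthonormalBasis ℝ _)
    (finCongr hdim)).unitSphereHomeomorph⟩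

/-- If `n` is odd then `[M, Sⁿ]^(q) = [M, Sⁿ]` for every topological
space `M` and every `q ≥ 1`: every map `M → Sⁿ` is homotopic to the first member of a
`q`-tuple of pairwise coincidence free maps. -/
theorem stmt16 (n : ℕ) (hn : Odd n) (M : Type*) [TopologicalSpace M]
    (q : ℕ) (hq : 0 < q) (f : C(M, Sph n)) :
    ∃ g : C(M, Cfg q (Sph n)), f.Homotopic ((cfgProj q hq (Sph n)).comp g) := by
  obtain ⟨k, hk⟩ := hn
  obtain ⟨e⟩ := nonempty_sph_homeomorph_unitSphere_complex hk
  obtain ⟨s, hs⟩ := Cfg.exists_cfgProj_comp_eq_id_of_homeomorph hq e.symm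
    (exists_cfgProj_comp_eq_id_sphere_complex q hq _)
  refine ⟨s.comp f, ?_⟩
  rw [← ContinuousMap.comp_assoc, hs, ContinuousMap.id_comp]
end
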